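/- Fix N ≥ 1, arrival angles θ_1,…,θ_N ∈ ℝ with sin(π(sin θ_n − sin θ_i)/2) ≠ 0 for all pairs n ≠ i, Ricean K-factors K_1,…,K_N ≥ 0, β_n > 0, E_u > 0 and an index n. For M > N, with Ω = diag(K_1,…,K_N) and H̄_M the M×N steering matrix, define Σ̂_M = (Ω+I_N)^{-1} + (1/M)·[Ω(Ω+I_N)^{-1}]^{1/2}·H̄_M^H H̄_M·[Ω(Ω+I_N)^{-1}]^{1/2}. Then Σ̂_M converges entrywise to I_N, Σ̂_M is invertible for all sufficiently large M, and log₂( 1 + (E_u/M)·β_n·(M−N) / [Σ̂_M^{-1}]_{nn} ) → log₂(1 + E_u·β_n) as M → ∞. -/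

import Mathlib

open Filter Matrix

/-- The `M×N` steering matrix with entries `[H̄]_{mn} = exp(−i(m−1)π sin θ_n)`, `m = 1,…,M`. -/
noncomputable def steer {N : ℕ} (θ : Fin N → ℝ) (M : ℕ) : Matrix (Fin M) (Fin N) ℂ :=
  fun m n => Complex.exp (-Complex.I * ((m : ℕ) : ℂ) * (Real.pi : ℂ) * (Real.sin (θ n) : ℂ))

/-- The diagonal matrix `[Ω(Ω+I_N)^{-1}]^{1/2}` with entries `√(K_i/(K_i+1))`. -/
noncomputable def sqrtRicean {N : ℕ} (K : Fin N → ℝ) : Matrix (Fin N) (Fin N) ℂ :=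
  Matrix.diagonal fun i => (Real.sqrt (K i / (K i + 1)) : ℂ)

/-- The matrix `Σ̂_M = (Ω+I_N)^{-1} + (1/M)·[Ω(Ω+I_N)^{-1}]^{1/2} H̄_M^H H̄_M [Ω(Ω+I_N)^{-1}]^{1/2}`. -/
noncomputable def sigmaHat {N : ℕ} (θ K : Fin N → ℝ) (M : ℕ) : Matrix (Fin N) (Fin N) ℂ :=
  Matrix.diagonal (fun i => ((1 / (K i + 1) : ℝ) : ℂ)) +
    ((M : ℂ))⁻¹ • (sqrtRicean K * ((steer θ M)ᴴ * steer θ M) * sqrtRicean K)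

/-! The off-diagonal entries of `H̄_Mᴴ H̄_M` are geometric sums whose ratio
`exp(iπ(sin θ_i − sin θ_j))` lies on the unit circle and, by the angle hypothesis, is not `1`;
they are therefore bounded by `1/|sin(π(sin θ_i − sin θ_j)/2)|` uniformly in `M`, while the
diagonal entries equal `M`. Hence `Σ̂_M → (Ω+I)⁻¹ + Ω(Ω+I)⁻¹ = I`, matrix inversion is
continuous at `I`, so `[Σ̂_M⁻¹]_{nn} → 1`, and `(E_u/M) β_n (M − N) → E_u β_n`. -/

lemma steer_gram_apply {N : ℕ} (θ : Fin N → ℝ) (M : ℕ) (i j : Fin N) :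
    ((steer θ M)ᴴ * steer θ M) i j = ∑ m ∈ Finset.range M,
      Complex.exp (Complex.I * (Real.pi * (Real.sin (θ i) - Real.sin (θ j)) : ℝ)) ^ m := by
  rw [Matrix.mul_apply, ← Fin.sum_univ_eq_sum_range]
  refine Finset.sum_congr rfl fun m _ => ?_
  rw [Matrix.conjTranspose_apply, steer, steer, Complex.star_def, ← Complex.exp_conj,
    ← Complex.exp_add, ← Complex.exp_nat_mul]
  congr 1
  simp only [map_mul, map_neg, Complex.conj_I, Complex.conj_ofReal, Complex.conj_natCast]
  push_cast
  ring

lemma steer_gram_apply_self {N : ℕ} (θ : Fin N → ℝ) (M : ℕ) (i : Fin N) :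
    ((steer θ M)ᴴ * steer θ M) i i = M := by
  simp [steer_gram_apply]

lemma norm_geom_sum_exp_I_mul_le {x : ℝ} (hx : Real.sin (x / 2) ≠ 0) (M : ℕ) :
    ‖∑ m ∈ Finset.range M, Complex.exp (Complex.I * x) ^ m‖ ≤ 1 / |Real.sin (x / 2)| := by
  have hdist : ‖Complex.exp (Complex.I * x) - 1‖ = 2 * |Real.sin (x / 2)| := by
    rw [Complex.norm_exp_I_mul_ofReal_sub_one, norm_mul, Real.norm_eq_abs]; norm_num
  have hne : Complex.exp (Complex.I * x) ≠ 1 := by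
    rw [← sub_ne_zero, ← norm_ne_zero_iff, hdist]; positivity
  have hnum : ‖Complex.exp (Complex.I * x) ^ M - 1‖ ≤ 2 := by
    calc _ ≤ ‖Complex.exp (Complex.I * x) ^ M‖ + ‖(1 : ℂ)‖ := norm_sub_le _ _
      _ = 2 := by rw [norm_pow, mul_comm, Complex.norm_exp_ofReal_mul_I]; norm_num
  rw [geom_sum_eq hne, norm_div, hdist, div_le_div_iff₀ (by positivity) (by positivity)]
  exact (mul_le_mul_of_nonneg_right hnum (abs_nonneg _)).trans_eq (by ring)

lemma norm_steer_gram_apply_le {N : ℕ} (θ : Fin N → ℝ) (M : ℕ) {i j : Fin N}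
    (hij : Real.sin (Real.pi * (Real.sin (θ i) - Real.sin (θ j)) / 2) ≠ 0) :
    ‖((steer θ M)ᴴ * steer θ M) i j‖
      ≤ 1 / |Real.sin (Real.pi * (Real.sin (θ i) - Real.sin (θ j)) / 2)| := by
  rw [steer_gram_apply]
  exact norm_geom_sum_exp_I_mul_le hij M

lemma sigmaHat_apply {N : ℕ} (θ K : Fin N → ℝ) (M : ℕ) (i j : Fin N) :
    sigmaHat θ K M i j = Matrix.diagonal (fun i => ((1 / (K i + 1) : ℝ) : ℂ)) i j +
      (M : ℂ)⁻¹ * (Real.sqrt (K i / (K i + 1)) * ((steer θ M)ᴴ * steer θ M) i j *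
        Real.sqrt (K j / (K j + 1))) := by
  simp [sigmaHat, sqrtRicean, Matrix.mul_diagonal, Matrix.diagonal_mul]

lemma sigmaHat_apply_self {N : ℕ} (θ : Fin N → ℝ) {K : Fin N → ℝ} (hK : ∀ i, 0 ≤ K i)
    {M : ℕ} (hM : M ≠ 0) (i : Fin N) : sigmaHat θ K M i i = 1 := by
  have hKi : 0 ≤ K i := hK i
  rw [sigmaHat_apply, Matrix.diagonal_apply_eq, steer_gram_apply_self,
    mul_right_comm _ (M : ℂ), ← Complex.ofReal_mul, Real.mul_self_sqrt (by positivity),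
    mul_comm, mul_assoc, mul_inv_cancel₀ (Nat.cast_ne_zero.2 hM), mul_one, ← Complex.ofReal_add]
  norm_cast
  field_simp
  ring

lemma norm_sqrt_div_add_one_le_one {k : ℝ} (hk : 0 ≤ k) :
    ‖((Real.sqrt (k / (k + 1)) : ℝ) : ℂ)‖ ≤ 1 := by
  rw [Complex.norm_real, Real.norm_of_nonneg (Real.sqrt_nonneg _), Real.sqrt_le_one,
    div_le_one (by positivity)]
  linarith

lemma tendsto_sigmaHat_apply_of_ne {N : ℕ} {θ : Fin N → ℝ} {K : Fin N → ℝ} (hK : ∀ i, 0 ≤ K i)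
    {i j : Fin N} (hij : i ≠ j)
    (hθ : Real.sin (Real.pi * (Real.sin (θ i) - Real.sin (θ j)) / 2) ≠ 0) :
    Tendsto (fun M : ℕ => sigmaHat θ K M i j) atTop (nhds 0) := by
  set C := 1 / |Real.sin (Real.pi * (Real.sin (θ i) - Real.sin (θ j)) / 2)|
  refine squeeze_zero_norm (fun M => ?_) (tendsto_const_div_atTop_nhds_zero_nat C)
  rw [sigmaHat_apply, Matrix.diagonal_apply_ne _ hij, zero_add, norm_mul, norm_mul, norm_mul,
    norm_inv, Complex.norm_natCast, ← div_eq_inv_mul]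
  gcongr
  calc _ ≤ 1 * C * 1 := by
        gcongr
        exacts [norm_sqrt_div_add_one_le_one (hK i), norm_steer_gram_apply_le θ M hθ,
          norm_sqrt_div_add_one_le_one (hK j)]
    _ = C := by ring

lemma tendsto_sigmaHat {N : ℕ} {θ : Fin N → ℝ}
    (hθ : ∀ n i : Fin N, n ≠ i →
      Real.sin (Real.pi * (Real.sin (θ n) - Real.sin (θ i)) / 2) ≠ 0)
    {K : Fin N → ℝ} (hK : ∀ i, 0 ≤ K i) :
    Tendsto (sigmaHat θ K) atTop (nhds 1) := by
  refine tendsto_pi_nhds.2 fun i => tendsto_pi_nhds.2 fun j => ?_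
  obtain rfl | hij := eq_or_ne i j
  · rw [Matrix.one_apply_eq]
    exact tendsto_const_nhds.congr' <|
      (eventually_ne_atTop 0).mono fun M hM => (sigmaHat_apply_self θ hK hM i).symm
  · rw [Matrix.one_apply_ne hij]
    exact tendsto_sigmaHat_apply_of_ne hK hij (hθ i j hij)

section InvertibleLimit

variable {α n 𝕜 : Type*} [Fintype n] [DecidableEq n] [Field 𝕜] [TopologicalSpace 𝕜]
  {l : Filter α} {A : α → Matrix n n 𝕜} {B : Matrix n n 𝕜}

lemma Matrix.eventually_isUnit_of_tendsto [IsTopologicalRing 𝕜] [T1Space 𝕜]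
    (hA : Tendsto A l (nhds B)) (hB : IsUnit B) : ∀ᶠ x in l, IsUnit (A x) := by
  have hdet : Tendsto (fun x => (A x).det) l (nhds B.det) :=
    ((continuous_id.matrix_det).tendsto B).comp hA
  filter_upwards [hdet.eventually_ne ((Matrix.isUnit_iff_isUnit_det B).1 hB).ne_zero] with x hx
  exact (Matrix.isUnit_iff_isUnit_det _).2 hx.isUnit

lemma Matrix.tendsto_inv_of_tendsto [IsTopologicalDivisionRing 𝕜]
    (hA : Tendsto A l (nhds B)) (hB : IsUnit B) : Tendsto (fun x => (A x)⁻¹) l (nhds B⁻¹) := by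
  have hdet : B.det ≠ 0 := ((Matrix.isUnit_iff_isUnit_det B).1 hB).ne_zero
  refine (continuousAt_matrix_inv B ?_).tendsto.comp hA
  rw [Ring.inverse_eq_inv']
  exact continuousAt_inv₀ hdet

end InvertibleLimit

lemma tendsto_div_natCast_mul_sub_natCast (c a : ℝ) :
    Tendsto (fun M : ℕ => c / M * (M - a)) atTop (nhds c) := by
  have h : Tendsto (fun M : ℕ => c * (1 - a / M)) atTop (nhds (c * (1 - 0))) :=
    tendsto_const_nhds.mul (tendsto_const_nhds.sub (tendsto_const_div_atTop_nhds_zero_nat a))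
  rw [sub_zero, mul_one] at h
  refine h.congr' ((eventually_ne_atTop 0).mono fun M hM => ?_)
  have : (M : ℝ) ≠ 0 := Nat.cast_ne_zero.2 hM
  field_simp

theorem zf_rate_approx_power_scaling_general
    (N : ℕ) (θ : Fin N → ℝ)
    (hθ : ∀ n i : Fin N, n ≠ i →
      Real.sin (Real.pi * (Real.sin (θ n) - Real.sin (θ i)) / 2) ≠ 0)
    (K : Fin N → ℝ) (hK : ∀ i, 0 ≤ K i)
    (β : Fin N → ℝ) (hβ : ∀ i, 0 < β i) (n : Fin N) (Eu : ℝ) (hEu : 0 < Eu) :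
    (∀ i j : Fin N,
      Filter.Tendsto (fun M : ℕ => sigmaHat θ K M i j) Filter.atTop
        (nhds ((1 : Matrix (Fin N) (Fin N) ℂ) i j))) ∧
    (∀ᶠ M : ℕ in Filter.atTop, IsUnit (sigmaHat θ K M)) ∧
    Filter.Tendsto (fun M : ℕ =>
        Real.logb 2 (1 + (Eu / M) * β n * ((M : ℝ) - N) / (((sigmaHat θ K M)⁻¹) n n).re))
      Filter.atTop (nhds (Real.logb 2 (1 + Eu * β n))) := by
  have hsigma := tendsto_sigmaHat hθ hK
  refine ⟨fun i j => (hsigma.apply_nhds i).apply_nhds j,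
    Matrix.eventually_isUnit_of_tendsto hsigma isUnit_one, ?_⟩
  have hinv : Tendsto (fun M : ℕ => ((sigmaHat θ K M)⁻¹ n n).re) atTop (nhds 1) := by
    have h := ((Matrix.tendsto_inv_of_tendsto hsigma isUnit_one).apply_nhds n).apply_nhds n
    simpa [Function.comp_def] using (Complex.continuous_re.tendsto _).comp h
  have hpower : Tendsto (fun M : ℕ => Eu / M * β n * (M - N)) atTop (nhds (Eu * β n)) := by
    simpa only [div_mul_eq_mul_div] using tendsto_div_natCast_mul_sub_natCast (Eu * β n) N
  have hlim : 1 + Eu * β n ≠ 0 := by have := hβ n; positivity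
  have hsnr : Tendsto (fun M : ℕ => 1 + Eu / M * β n * (M - N) / ((sigmaHat θ K M)⁻¹ n n).re)
      atTop (nhds (1 + Eu * β n)) := by
    simpa using tendsto_const_nhds.add (hpower.div hinv one_ne_zero)
  exact (Real.continuousAt_logb hlim).tendsto.comp hsnr

/-- (Corollary 4 of the paper.) `Σ̂_M → I_N` entrywise, `Σ̂_M` is
invertible for all large `M`, and with `p_u = E_u/M` the closed-form ZF rate approximation
`log₂(1 + (E_u/M) β_n (M−N)/[Σ̂_M^{-1}]_{nn})` converges to `log₂(1 + E_u β_n)`. -/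
theorem zf_rate_approx_power_scaling
    (N : ℕ) (hN : 1 ≤ N) (θ : Fin N → ℝ)
    (hθ : ∀ n i : Fin N, n ≠ i →
      Real.sin (Real.pi * (Real.sin (θ n) - Real.sin (θ i)) / 2) ≠ 0)
    (K : Fin N → ℝ) (hK : ∀ i, 0 ≤ K i)
    (β : Fin N → ℝ) (hβ : ∀ i, 0 < β i) (n : Fin N) (Eu : ℝ) (hEu : 0 < Eu) :
    (∀ i j : Fin N,
      Filter.Tendsto (fun M : ℕ => sigmaHat θ K M i j) Filter.atTop
        (nhds ((1 : Matrix (Fin N) (Fin N) ℂ) i j))) ∧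
    (∀ᶠ M : ℕ in Filter.atTop, IsUnit (sigmaHat θ K M)) ∧
    Filter.Tendsto (fun M : ℕ =>
        Real.logb 2 (1 + (Eu / M) * β n * ((M : ℝ) - N) / (((sigmaHat θ K M)⁻¹) n n).re))
      Filter.atTop (nhds (Real.logb 2 (1 + Eu * β n))) :=
  zf_rate_approx_power_scaling_general N θ hθ K hK β hβ n Eu hEu
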